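/- Let G be a connected oriented loopless multigraph with oriented incidence matrix D ∈ ℝ^{V×E}. Then the Jacobian Jac(G) = Div⁰(G)/Prin(G) is isomorphic as an abelian group to B_I^#/B_I. -/

import Mathlib

open Matrix Finset

section MatrixSpaces

variable {ι κ : Type*} [Fintype ι] [Fintype κ]

/-- The cycle space `Z = ker D`. -/
def cycleSpace (D : Matrix ι κ ℝ) : Submodule ℝ (κ → ℝ) :=
  LinearMap.ker D.mulVecLin

/-- The cut space `B = Z^⊥`, the orthogonal complement of the cycle space with respect to the
standard inner product. -/
def cutSpace (D : Matrix ι κ ℝ) : Submodule ℝ (κ → ℝ) where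
  carrier := {x | ∀ z ∈ cycleSpace D, x ⬝ᵥ z = 0}
  add_mem' := by
    intro a b ha hb z hz
    simp [add_dotProduct, ha z hz, hb z hz]
  zero_mem' := by
    intro z hz
    simp
  smul_mem' := by
    intro c a ha z hz
    simp [smul_dotProduct, ha z hz]

/-- The cut lattice `B_I = B ∩ ℤ^E`. -/
def cutLattice (D : Matrix ι κ ℝ) : Set (κ → ℝ) :=
  {x | x ∈ cutSpace D ∧ ∀ e, ∃ k : ℤ, x e = (k : ℝ)}

/-- The cut lattice `B_I`, as an additive subgroup. -/
def cutLatticeSub (D : Matrix ι κ ℝ) : AddSubgroup (κ → ℝ) where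
  carrier := cutLattice D
  add_mem' := by
    rintro a b ⟨ha, ha'⟩ ⟨hb, hb'⟩
    refine ⟨Submodule.add_mem _ ha hb, fun e => ?_⟩
    obtain ⟨k, hk⟩ := ha' e
    obtain ⟨l, hl⟩ := hb' e
    exact ⟨k + l, by simp [hk, hl]⟩
  zero_mem' := ⟨Submodule.zero_mem _, fun e => ⟨0, by simp⟩⟩
  neg_mem' := by
    rintro a ⟨ha, ha'⟩
    refine ⟨Submodule.neg_mem _ ha, fun e => ?_⟩
    obtain ⟨k, hk⟩ := ha' e
    exact ⟨-k, by simp [hk]⟩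

/-- The dual lattice `B_I^# = {x ∈ B : ⟨x,b⟩ ∈ ℤ for all b ∈ B_I}`, as an additive subgroup. -/
def dualLatticeSub (D : Matrix ι κ ℝ) : AddSubgroup (κ → ℝ) where
  carrier := {x | x ∈ cutSpace D ∧ ∀ b ∈ cutLattice D, ∃ k : ℤ, x ⬝ᵥ b = (k : ℝ)}
  add_mem' := by
    rintro a b ⟨ha, ha'⟩ ⟨hb, hb'⟩
    refine ⟨Submodule.add_mem _ ha hb, fun c hc => ?_⟩
    obtain ⟨k, hk⟩ := ha' c hc
    obtain ⟨l, hl⟩ := hb' c hc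
    exact ⟨k + l, by simp [add_dotProduct, hk, hl]⟩
  zero_mem' := ⟨Submodule.zero_mem _, fun c _ => ⟨0, by simp⟩⟩
  neg_mem' := by
    rintro a ⟨ha, ha'⟩
    refine ⟨Submodule.neg_mem _ ha, fun c hc => ?_⟩
    obtain ⟨k, hk⟩ := ha' c hc
    exact ⟨-k, by simp [neg_dotProduct, hk]⟩

end MatrixSpaces

section Incidence

variable {V E : Type*} [Fintype V] [Fintype E] [DecidableEq V]

/-- The oriented incidence matrix of an oriented multigraph with head map `h` and
tail map `t`. -/
def incMatrix (h t : E → V) : Matrix V E ℝ :=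
  fun v e => if v = h e then 1 else if v = t e then -1 else 0

/-- The edge-multiplicity function determined by the orientation maps `h` and `t`. -/
def wOf (h t : E → V) (u v : V) : ℕ :=
  (Finset.univ.filter fun e => (h e = u ∧ t e = v) ∨ (h e = v ∧ t e = u)).card

end Incidence


variable {V : Type*}

/-- Degree of a vertex in the loopless multigraph with edge-multiplicity function `w`. -/
def mgDeg [Fintype V] (w : V → V → ℕ) (v : V) : ℕ := ∑ u, w v u

/-- The Laplacian of the multigraph, as an additive homomorphism on `V → ℤ`. -/
def mgLap [Fintype V] (w : V → V → ℕ) : (V → ℤ) →+ (V → ℤ) :=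
  AddMonoidHom.mk' (fun f v => (mgDeg w v : ℤ) * f v - ∑ u, (w v u : ℤ) * f u)
    (by
      intro f g
      funext v
      simp [mul_add, Finset.sum_add_distrib]
      ring)

/-- The group `Div⁰(G)` of divisors of degree zero. -/
def mgDiv0 (V : Type*) [Fintype V] : AddSubgroup (V → ℤ) :=
  AddMonoidHom.ker
    (AddMonoidHom.mk' (fun D : V → ℤ => ∑ v, D v)
      (by intro a b; simp [Finset.sum_add_distrib]))

/-- The group `Prin(G)` of principal divisors, the image of the Laplacian. -/
def mgPrin [Fintype V] (w : V → V → ℕ) : AddSubgroup (V → ℤ) := (mgLap w).range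

/-- The Jacobian `Jac(G) = Div⁰(G)/Prin(G)`. -/
abbrev mgJac (V : Type*) [Fintype V] (w : V → V → ℕ) : Type _ :=
  mgDiv0 V ⧸ ((mgPrin w).addSubgroupOf (mgDiv0 V))

/-- The underlying simple graph: `u` adjacent to `v` iff `u ≠ v` and `w u v > 0`. -/
def mgUnderlying (w : V → V → ℕ) : SimpleGraph V :=
  SimpleGraph.fromRel (fun u v => 0 < w u v)

/-! The map `x ↦ D x` is an isomorphism `B_I^# ≃ Div⁰(G)` carrying `B_I` onto `Prin(G)`.
Since `rank (D Dᵀ) = rank D`, the cut space `B = Z^⊥` is the row space `im Dᵀ`, and `D` is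
injective on it. Connectivity makes `im D` the whole space of degree-zero vectors and gives
`B_I = Dᵀ ℤ^V`, so by `⟨x, Dᵀ y⟩ = ⟨D x, y⟩` the dual lattice `B_I^#` consists of the `x ∈ B`
with `D x` integral. Finally `D Dᵀ` is the Laplacian, so `D (Dᵀ y) = L y` matches `B_I` with
`Prin(G)`. -/

section CutSpace

variable {ι κ : Type*} [Fintype κ] (D : Matrix ι κ ℝ)

lemma vecMul_mem_cutSpace [Fintype ι] (y : ι → ℝ) : y ᵥ* D ∈ cutSpace D := fun z hz => by
  rw [← dotProduct_mulVec, show D *ᵥ z = 0 from hz, dotProduct_zero]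

lemma eq_of_mem_cutSpace_of_mulVec_eq {x x' : κ → ℝ} (hx : x ∈ cutSpace D)
    (hx' : x' ∈ cutSpace D) (hD : D *ᵥ x = D *ᵥ x') : x = x' := by
  have hcyc : x - x' ∈ cycleSpace D := by
    simp [cycleSpace, Matrix.mulVec_sub, hD]
  exact sub_eq_zero.mp (dotProduct_self_eq_zero.mp ((cutSpace D).sub_mem hx hx' _ hcyc))

lemma mulVec_vecMul_eq_mul_transpose_mulVec [Fintype ι] (y : ι → ℝ) :
    D *ᵥ (y ᵥ* D) = (D * Dᵀ) *ᵥ y := by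
  rw [← mulVec_transpose, mulVec_mulVec]

lemma exists_vecMul_mulVec_eq [Fintype ι] (x : κ → ℝ) :
    ∃ y : ι → ℝ, D *ᵥ (y ᵥ* D) = D *ᵥ x := by
  have hrange : LinearMap.range (D * Dᵀ).mulVecLin = LinearMap.range D.mulVecLin := by
    refine Submodule.eq_of_le_of_finrank_eq ?_ (rank_self_mul_transpose D)
    rintro _ ⟨y, rfl⟩
    exact ⟨y ᵥ* D, mulVec_vecMul_eq_mul_transpose_mulVec D y⟩
  obtain ⟨y, hy⟩ : D *ᵥ x ∈ LinearMap.range (D * Dᵀ).mulVecLin := hrange ▸ ⟨x, rfl⟩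
  exact ⟨y, (mulVec_vecMul_eq_mul_transpose_mulVec D y).trans hy⟩

lemma mem_cutSpace_iff [Fintype ι] {x : κ → ℝ} : x ∈ cutSpace D ↔ ∃ y : ι → ℝ, y ᵥ* D = x := by
  refine ⟨fun hx => ?_, fun ⟨y, hy⟩ => hy ▸ vecMul_mem_cutSpace D y⟩
  obtain ⟨y, hy⟩ := exists_vecMul_mulVec_eq D x
  exact ⟨y, eq_of_mem_cutSpace_of_mulVec_eq D (vecMul_mem_cutSpace D y) hx hy⟩

end CutSpace

section IncidenceMatrix

variable {V E : Type*} [DecidableEq V] {h t : E → V}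

lemma incMatrix_apply_eq (hne : ∀ e, h e ≠ t e) (v : V) (e : E) :
    incMatrix h t v e = (Pi.single (h e) 1 - Pi.single (t e) 1 : V → ℝ) v := by
  simp only [incMatrix, Pi.sub_apply, Pi.single_apply]
  split_ifs <;> grind

lemma vecMul_incMatrix_apply [Fintype V] (hne : ∀ e, h e ≠ t e) (y : V → ℝ) (e : E) :
    (y ᵥ* incMatrix h t) e = y (h e) - y (t e) := by
  simp [vecMul, dotProduct, incMatrix_apply_eq hne, mul_sub, Pi.single_apply]

lemma sum_incMatrix_mulVec [Fintype V] [Fintype E] (hne : ∀ e, h e ≠ t e) (x : E → ℝ) :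
    ∑ v, (incMatrix h t *ᵥ x) v = 0 := by
  simp [mulVec, dotProduct, Finset.sum_comm (γ := V), incMatrix_apply_eq hne, sub_mul,
    Pi.single_apply]

lemma incMatrix_mulVec_single [Fintype E] [DecidableEq E] (hne : ∀ e, h e ≠ t e) (e : E) :
    incMatrix h t *ᵥ Pi.single e 1 = Pi.single (h e) 1 - Pi.single (t e) 1 := by
  ext v
  simp [incMatrix_apply_eq hne]

lemma incMatrix_mulVec_vecMul [Fintype V] [Fintype E] (hne : ∀ e, h e ≠ t e) (y : V → ℤ) :
    incMatrix h t *ᵥ ((fun v => (y v : ℝ)) ᵥ* incMatrix h t) =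
      fun v => (mgLap (wOf h t) y v : ℝ) := by
  ext v
  have hlap : (mgLap (wOf h t) y v : ℝ) =
      ∑ u, ∑ e, if (h e = v ∧ t e = u) ∨ (h e = u ∧ t e = v) then (y v - y u : ℝ) else 0 := by
    simp only [mgLap, mgDeg, AddMonoidHom.mk'_apply, wOf]
    push_cast
    simp [Finset.sum_mul, ← Finset.sum_sub_distrib, ← mul_sub, Finset.sum_ite]
  rw [hlap, Finset.sum_comm]
  refine Finset.sum_congr rfl fun e _ => ?_
  simp only [vecMul_incMatrix_apply hne, incMatrix_apply_eq hne]
  by_cases h1 : h e = v <;> by_cases h2 : t e = v <;> simp_all [eq_comm]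

end IncidenceMatrix

section Connectivity

variable {V E : Type*} [Fintype E] [DecidableEq V] {h t : E → V}

lemma exists_edge_of_adj {u v : V} (huv : (mgUnderlying (wOf h t)).Adj u v) :
    ∃ e, (h e = u ∧ t e = v) ∨ (h e = v ∧ t e = u) := by
  rcases (SimpleGraph.fromRel_adj _ u v).mp huv with ⟨-, huv | hvu⟩
  · obtain ⟨e, he⟩ := Finset.card_pos.mp huv
    exact ⟨e, (Finset.mem_filter.mp he).2⟩
  · obtain ⟨e, he⟩ := Finset.card_pos.mp hvu
    exact ⟨e, (Finset.mem_filter.mp he).2.symm⟩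

lemma sub_mem_of_reachable {M : Type*} [AddGroup M] (S : AddSubgroup M) (y : V → M)
    (hy : ∀ e, y (h e) - y (t e) ∈ S) {a b : V}
    (hab : (mgUnderlying (wOf h t)).Reachable a b) : y a - y b ∈ S := by
  obtain ⟨p⟩ := hab
  induction p with
  | nil => simp
  | @cons a c b hac _ ih =>
    have hedge : y a - y c ∈ S := by
      obtain ⟨e, ⟨rfl, rfl⟩ | ⟨rfl, rfl⟩⟩ := exists_edge_of_adj hac
      · exact hy e
      · simpa using S.neg_mem (hy e)
    simpa using S.add_mem hedge ih

end Connectivity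

section Lattices

variable {V E : Type*} [Fintype V] [Fintype E] [DecidableEq V] {h t : E → V}

lemma exists_incMatrix_mulVec_eq (hne : ∀ e, h e ≠ t e)
    (hconn : (mgUnderlying (wOf h t)).Connected) {d : V → ℝ} (hd : ∑ v, d v = 0) :
    ∃ x, incMatrix h t *ᵥ x = d := by
  classical
  set R := LinearMap.range (incMatrix h t).mulVecLin
  obtain ⟨v₀⟩ := hconn.nonempty
  have hsingle : ∀ u, Pi.single u 1 - Pi.single v₀ 1 ∈ R := fun u =>
    sub_mem_of_reachable R.toAddSubgroup (fun v => Pi.single v 1)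
      (fun e => ⟨Pi.single e 1, incMatrix_mulVec_single hne e⟩) (hconn.preconnected u v₀)
  have hdecomp : d = ∑ u, d u • (Pi.single u 1 - Pi.single v₀ 1 : V → ℝ) := by
    ext v
    simp [Finset.sum_apply, Pi.single_apply, mul_sub, Finset.sum_sub_distrib, hd]
  exact hdecomp ▸ R.sum_mem fun u _ => R.smul_mem (d u) (hsingle u)

lemma intCast_vecMul_mem_cutLattice (hne : ∀ e, h e ≠ t e) (y : V → ℤ) :
    (fun v => (y v : ℝ)) ᵥ* incMatrix h t ∈ cutLattice (incMatrix h t) :=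
  ⟨vecMul_mem_cutSpace _ _, fun e => ⟨y (h e) - y (t e), by simp [vecMul_incMatrix_apply hne]⟩⟩

lemma exists_intCast_vecMul_eq_of_mem_cutLattice (hne : ∀ e, h e ≠ t e)
    (hconn : (mgUnderlying (wOf h t)).Connected) {x : E → ℝ}
    (hx : x ∈ cutLattice (incMatrix h t)) :
    ∃ y : V → ℤ, (fun v => (y v : ℝ)) ᵥ* incMatrix h t = x := by
  obtain ⟨y, rfl⟩ := (mem_cutSpace_iff _).mp hx.1
  obtain ⟨v₀⟩ := hconn.nonempty
  have hint : ∀ v, y v - y v₀ ∈ (Int.castAddHom ℝ).range := fun v =>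
    sub_mem_of_reachable _ y (fun e => by
      obtain ⟨k, hk⟩ := hx.2 e
      exact ⟨k, by rw [← vecMul_incMatrix_apply hne, hk]; rfl⟩) (hconn.preconnected v v₀)
  choose k hk using hint
  refine ⟨k, funext fun e => ?_⟩
  have hhead := hk (h e)
  have htail := hk (t e)
  simp only [Int.coe_castAddHom] at hhead htail
  rw [vecMul_incMatrix_apply hne, vecMul_incMatrix_apply hne, hhead, htail,
    sub_sub_sub_cancel_right]

lemma incMatrix_row_mem_cutLattice (hne : ∀ e, h e ≠ t e) (v : V) :
    incMatrix h t v ∈ cutLattice (incMatrix h t) := by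
  convert intCast_vecMul_mem_cutLattice hne (Pi.single v 1) using 1
  ext e
  simp [vecMul_incMatrix_apply hne, incMatrix_apply_eq hne, Pi.single_apply, @eq_comm _ v]

end Lattices

section Jacobian

variable {V E : Type*} [Fintype V] [Fintype E] [DecidableEq V] {h t : E → V}

lemma intCast_floor_mulVec_of_mem_dualLattice (hne : ∀ e, h e ≠ t e) {x : E → ℝ}
    (hx : x ∈ dualLatticeSub (incMatrix h t)) (v : V) :
    (⌊(incMatrix h t *ᵥ x) v⌋ : ℝ) = (incMatrix h t *ᵥ x) v := by
  obtain ⟨k, hk⟩ := hx.2 _ (incMatrix_row_mem_cutLattice hne v)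
  rw [show (incMatrix h t *ᵥ x) v = k by rw [← hk, dotProduct_comm]; rfl, Int.floor_intCast]

/-- The map `x ↦ D x`: it is integral because the rows of `D` lie in `B_I`, and the floor only
reads off that integer. -/
noncomputable def dualLatticeToDiv0 (hne : ∀ e, h e ≠ t e) :
    dualLatticeSub (incMatrix h t) →+ mgDiv0 V where
  toFun x := ⟨fun v => ⌊(incMatrix h t *ᵥ x) v⌋, AddMonoidHom.mem_ker.mpr <|
    Int.cast_injective (α := ℝ) <| by
      simpa [intCast_floor_mulVec_of_mem_dualLattice hne x.2] using sum_incMatrix_mulVec hne x⟩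
  map_zero' := by ext; simp
  map_add' x y := by
    ext v
    refine Int.cast_injective (α := ℝ) ?_
    simpa [intCast_floor_mulVec_of_mem_dualLattice hne x.2,
      intCast_floor_mulVec_of_mem_dualLattice hne y.2, mulVec_add]
      using intCast_floor_mulVec_of_mem_dualLattice hne (x + y).2 v

lemma intCast_dualLatticeToDiv0 (hne : ∀ e, h e ≠ t e) (x : dualLatticeSub (incMatrix h t)) :
    (fun v => ((dualLatticeToDiv0 hne x : V → ℤ) v : ℝ)) = incMatrix h t *ᵥ x :=
  funext (intCast_floor_mulVec_of_mem_dualLattice hne x.2)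

lemma dualLatticeToDiv0_injective (hne : ∀ e, h e ≠ t e) :
    Function.Injective (dualLatticeToDiv0 hne) := fun x x' hxx' => by
  refine Subtype.ext (eq_of_mem_cutSpace_of_mulVec_eq _ x.2.1 x'.2.1 ?_)
  rw [← intCast_dualLatticeToDiv0 hne, ← intCast_dualLatticeToDiv0 hne, hxx']

lemma mem_dualLatticeSub_of_mulVec_eq_intCast (hne : ∀ e, h e ≠ t e)
    (hconn : (mgUnderlying (wOf h t)).Connected) {b : E → ℝ}
    (hb : b ∈ cutSpace (incMatrix h t)) {d : V → ℤ}
    (hd : incMatrix h t *ᵥ b = fun v => (d v : ℝ)) : b ∈ dualLatticeSub (incMatrix h t) := by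
  refine ⟨hb, fun c hc => ?_⟩
  obtain ⟨y, rfl⟩ := exists_intCast_vecMul_eq_of_mem_cutLattice hne hconn hc
  refine ⟨∑ v, y v * d v, ?_⟩
  rw [dotProduct_comm, ← dotProduct_mulVec, hd]
  simp [dotProduct]

lemma dualLatticeToDiv0_surjective (hne : ∀ e, h e ≠ t e)
    (hconn : (mgUnderlying (wOf h t)).Connected) :
    Function.Surjective (dualLatticeToDiv0 hne) := by
  rintro ⟨d, hd⟩
  have hd' : ∑ v, (d v : ℝ) = 0 := by exact_mod_cast (AddMonoidHom.mem_ker.mp hd)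
  obtain ⟨x, hx⟩ := exists_incMatrix_mulVec_eq hne hconn hd'
  obtain ⟨y, hy⟩ := exists_vecMul_mulVec_eq (incMatrix h t) x
  have hb := mem_dualLatticeSub_of_mulVec_eq_intCast hne hconn
    (vecMul_mem_cutSpace _ y) (hy.trans hx)
  refine ⟨⟨_, hb⟩, Subtype.ext (funext fun v => Int.cast_injective (α := ℝ) ?_)⟩
  simpa [hy.trans hx] using congrFun (intCast_dualLatticeToDiv0 hne ⟨_, hb⟩) v

lemma dualLatticeToDiv0_mem_prin_iff (hne : ∀ e, h e ≠ t e)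
    (hconn : (mgUnderlying (wOf h t)).Connected) (x : dualLatticeSub (incMatrix h t)) :
    (dualLatticeToDiv0 hne x : V → ℤ) ∈ mgPrin (wOf h t) ↔
      (x : E → ℝ) ∈ cutLattice (incMatrix h t) := by
  constructor
  · rintro ⟨y, hy⟩
    have hDx : incMatrix h t *ᵥ ((fun v => (y v : ℝ)) ᵥ* incMatrix h t) = incMatrix h t *ᵥ x := by
      rw [incMatrix_mulVec_vecMul hne, ← intCast_dualLatticeToDiv0 hne, hy]
    rw [← eq_of_mem_cutSpace_of_mulVec_eq _ (vecMul_mem_cutSpace _ _) x.2.1 hDx]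
    exact intCast_vecMul_mem_cutLattice hne y
  · intro hx
    obtain ⟨y, hy⟩ := exists_intCast_vecMul_eq_of_mem_cutLattice hne hconn hx
    refine ⟨y, funext fun v => Int.cast_injective (α := ℝ) ?_⟩
    have hlap := congrFun (incMatrix_mulVec_vecMul hne y) v
    rw [hy, ← intCast_dualLatticeToDiv0 hne] at hlap
    exact hlap.symm

noncomputable def dualLatticeEquivDiv0 (hne : ∀ e, h e ≠ t e)
    (hconn : (mgUnderlying (wOf h t)).Connected) :
    dualLatticeSub (incMatrix h t) ≃+ mgDiv0 V :=
  AddEquiv.ofBijective (dualLatticeToDiv0 hne)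
    ⟨dualLatticeToDiv0_injective hne, dualLatticeToDiv0_surjective hne hconn⟩

lemma map_dualLatticeEquivDiv0_cutLattice (hne : ∀ e, h e ≠ t e)
    (hconn : (mgUnderlying (wOf h t)).Connected) :
    ((cutLatticeSub (incMatrix h t)).addSubgroupOf (dualLatticeSub (incMatrix h t))).map
      (dualLatticeEquivDiv0 hne hconn) = (mgPrin (wOf h t)).addSubgroupOf (mgDiv0 V) := by
  set e := dualLatticeEquivDiv0 hne hconn
  ext d
  obtain ⟨x, rfl⟩ := e.surjective d
  simp only [AddSubgroup.map_equiv_eq_comap_symm, AddSubgroup.mem_comap,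
    AddSubgroup.mem_addSubgroupOf, AddMonoidHom.coe_coe, AddEquiv.symm_apply_apply]
  exact (dualLatticeToDiv0_mem_prin_iff hne hconn x).symm

end Jacobian

/-- for a connected oriented loopless multigraph with incidence matrix `D`, the
Jacobian `Jac(G) = Div⁰(G)/Prin(G)` is isomorphic as an abelian group to `B_I^#/B_I`. -/
theorem stmt15 (V E : Type*) [Fintype V] [Fintype E] [DecidableEq V]
    (h t : E → V) (hne : ∀ e : E, h e ≠ t e)
    (hconn : (mgUnderlying (wOf h t)).Connected) :
    Nonempty (mgJac V (wOf h t) ≃+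
      (dualLatticeSub (incMatrix h t) ⧸
        (cutLatticeSub (incMatrix h t)).addSubgroupOf (dualLatticeSub (incMatrix h t)))) :=
  ⟨(QuotientAddGroup.congr _ _ (dualLatticeEquivDiv0 hne hconn)
    (map_dualLatticeEquivDiv0_cutLattice hne hconn)).symm⟩
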